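/- Let $m_n \in W_n$ satisfy the recursion $m_{k+1} = x_k^2 m_k x_k^{-1}$ with $m_2 = a_1$, and let $v_i = x_{i+2}^2$. Then for all $n \geq 3$: $m_n^{-1} v_{n-3} v_{n-4}\cdots v_2 v_1 = (m_n)^{x_n^{2^{n-2}+2}}$. -/

import Mathlib

/-- Leaves of the complete binary rooted tree of height `n`, recorded as the
big-endian bit string of the (0-indexed) leaf label. -/
abbrev Leaf (n : ℕ) := Fin n → Bool

/-- The function underlying the standard generator `a k` of `Aut(T_n)`:
it flips coordinate `n - k` of a leaf lying on the leftmost spine above level `n - k`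
(this is the permutation `(1, 2^(k-1)+1)(2, 2^(k-1)+2) ⋯ (2^(k-1), 2^k)` of the leaves). -/
def aFun (n k : ℕ) (ℓ : Leaf n) : Leaf n := fun t =>
  if (t : ℕ) = n - k ∧ (∀ s : Fin n, (s : ℕ) < n - k → ℓ s = false) then !(ℓ t) else ℓ t

lemma aFun_apply (n k : ℕ) (ℓ : Leaf n) (t : Fin n) :
    aFun n k ℓ t =
      if (t : ℕ) = n - k ∧ (∀ s : Fin n, (s : ℕ) < n - k → ℓ s = false) then !(ℓ t) else ℓ t :=
  rfl

lemma aFun_spine (n k : ℕ) (ℓ : Leaf n) (s : Fin n) (hs : (s : ℕ) < n - k) :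
    aFun n k ℓ s = ℓ s := by
  rw [aFun_apply, if_neg]
  rintro ⟨h1, -⟩
  omega

lemma aFun_cond (n k : ℕ) (ℓ : Leaf n) (t : Fin n) :
    ((t : ℕ) = n - k ∧ (∀ s : Fin n, (s : ℕ) < n - k → aFun n k ℓ s = false)) ↔
    ((t : ℕ) = n - k ∧ (∀ s : Fin n, (s : ℕ) < n - k → ℓ s = false)) := by
  constructor
  · rintro ⟨h1, h2⟩
    refine ⟨h1, fun s hs => ?_⟩
    have h := h2 s hs
    rwa [aFun_spine n k ℓ s hs] at h
  · rintro ⟨h1, h2⟩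
    refine ⟨h1, fun s hs => ?_⟩
    rw [aFun_spine n k ℓ s hs]
    exact h2 s hs

lemma aFun_involutive (n k : ℕ) : Function.Involutive (aFun n k) := by
  intro ℓ
  funext t
  rw [show aFun n k (aFun n k ℓ) t =
    (if (t : ℕ) = n - k ∧ (∀ s : Fin n, (s : ℕ) < n - k → aFun n k ℓ s = false)
      then !(aFun n k ℓ t) else aFun n k ℓ t) from rfl]
  by_cases h : (t : ℕ) = n - k ∧ (∀ s : Fin n, (s : ℕ) < n - k → ℓ s = false)
  · rw [if_pos ((aFun_cond n k ℓ t).mpr h), aFun_apply, if_pos h, Bool.not_not]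
  · rw [if_neg (fun hc => h ((aFun_cond n k ℓ t).mp hc)), aFun_apply, if_neg h]

/-- The standard generator `a_k` of `Aut(T_n)` (as a permutation of the leaves). -/
def aPerm (n k : ℕ) : Equiv.Perm (Leaf n) :=
  Function.Involutive.toPerm (aFun n k) (aFun_involutive n k)

lemma aPerm_apply (n k : ℕ) (ℓ : Leaf n) : aPerm n k ℓ = aFun n k ℓ := rfl

/-- The automorphism group `W_n` of the complete binary rooted tree of height `n`,
realized as the subgroup of permutations of the `2^n` leaves which, at every level `m`,
map leaves agreeing in their first `m` coordinates to leaves agreeing in their first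
`m` coordinates. -/
def treeGroup (n : ℕ) : Subgroup (Equiv.Perm (Leaf n)) where
  carrier := {σ | ∀ m : ℕ, ∀ i j : Leaf n,
    (∀ t : Fin n, (t : ℕ) < m → σ i t = σ j t) ↔ (∀ t : Fin n, (t : ℕ) < m → i t = j t)}
  one_mem' := by intro m i j; simp
  mul_mem' := by
    intro a b ha hb m i j
    simpa [Equiv.Perm.mul_apply] using (ha m (b i) (b j)).trans (hb m i j)
  inv_mem' := by
    intro a ha m i j
    simpa using (ha m (a⁻¹ i) (a⁻¹ j)).symm

lemma mem_treeGroup (n : ℕ) (σ : Equiv.Perm (Leaf n)) :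
    σ ∈ treeGroup n ↔ ∀ m : ℕ, ∀ i j : Leaf n,
      (∀ t : Fin n, (t : ℕ) < m → σ i t = σ j t) ↔ (∀ t : Fin n, (t : ℕ) < m → i t = j t) :=
  Iff.rfl

lemma aPerm_mem (n k : ℕ) : aPerm n k ∈ treeGroup n := by
  have D : ∀ (i j : Leaf n) (m : ℕ), (∀ t : Fin n, (t : ℕ) < m → i t = j t) →
      (∀ t : Fin n, (t : ℕ) < m → aFun n k i t = aFun n k j t) := by
    intro i j m hij t ht
    rw [aFun_apply, aFun_apply]
    by_cases h1 : (t : ℕ) = n - k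
    · have hsp : (∀ s : Fin n, (s : ℕ) < n - k → i s = false) ↔
          (∀ s : Fin n, (s : ℕ) < n - k → j s = false) := by
        constructor
        · intro h s hs
          rw [← hij s (by omega)]; exact h s hs
        · intro h s hs
          rw [hij s (by omega)]; exact h s hs
      by_cases h2 : ∀ s : Fin n, (s : ℕ) < n - k → i s = false
      · rw [if_pos ⟨h1, h2⟩, if_pos ⟨h1, hsp.mp h2⟩, hij t ht]
      · rw [if_neg (fun hc => h2 hc.2), if_neg (fun hc => h2 (hsp.mpr hc.2)), hij t ht]
    · rw [if_neg (fun hc => h1 hc.1), if_neg (fun hc => h1 hc.1), hij t ht]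
  rw [mem_treeGroup]
  intro m i j
  constructor
  · intro h t ht
    have h2 := D (aPerm n k i) (aPerm n k j) m (fun t ht => by
      simpa [aPerm_apply] using h t ht) t ht
    rwa [show aFun n k (aPerm n k i) = i from aFun_involutive n k i,
      show aFun n k (aPerm n k j) = j from aFun_involutive n k j] at h2
  · intro h t ht
    simpa [aPerm_apply] using D i j m h t ht

/-- The standard generator `a_k` as an element of `W_n`. -/
def aEl (n k : ℕ) : ↥(treeGroup n) := ⟨aPerm n k, aPerm_mem n k⟩

/-- The standard `k`-odometer `x_k = a_1 a_2 ⋯ a_k`, viewed inside `W_n`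
(via the natural inclusion of `W_k` acting on the left part of the tree). -/
def xEl (n k : ℕ) : ↥(treeGroup n) :=
  (((List.range k).map fun j => aEl n (j + 1))).prod

/-- `v_i = x_{i+2}^2`, viewed inside `W_n`. -/
def vEl (n i : ℕ) : ↥(treeGroup n) := (xEl n (i + 2)) ^ 2

/-- `m_n = a_{n-1} (x_{n-2})^{x_n}` (with `g^h = h g h⁻¹`), viewed inside `W_n`. -/
def mEl (n : ℕ) : ↥(treeGroup n) :=
  aEl n (n - 1) * (xEl n n * xEl n (n - 2) * (xEl n n)⁻¹)

/-- A permutation of the leaves of `T_n` is an `n`-odometer if it acts transitively on them. -/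
def IsOdometer (n : ℕ) (σ : Equiv.Perm (Leaf n)) : Prop :=
  ∀ i j : Leaf n, ∃ t : ℕ, (σ ^ t) i = j

/-- The generating set `{v_i : i ≤ k - 3}` of `V_k`, inside `W_n`. -/
def VsetK (n k : ℕ) : Set ↥(treeGroup n) := {g | ∃ i : ℕ, i + 3 ≤ k ∧ g = vEl n i}

/-- The subgroup `V_k = ⟨v_{k-3}, …, v_0⟩ ≤ W_n`. -/
def VgrpK (n k : ℕ) : Subgroup ↥(treeGroup n) := Subgroup.closure (VsetK n k)

/-- The group `M_k = ⟨x_k, v_{k-3}, …, v_0⟩` of Section 4, inside `W_n`. -/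
def MgrpK (n k : ℕ) : Subgroup ↥(treeGroup n) :=
  Subgroup.closure (insert (xEl n k) (VsetK n k))

/-- The normal closure `N_k = V_k^{M_k}` of `V_k` in `M_k`, inside `W_n`. -/
def NgrpK (n k : ℕ) : Subgroup ↥(treeGroup n) :=
  Subgroup.closure {g | ∃ m ∈ MgrpK n k, ∃ v ∈ VsetK n k, g = m * v * m⁻¹}

/-- The group `M_n = ⟨x_n, m_n, v_{n-3}, …, v_0⟩` of Section 5. -/
def MgrpB (n : ℕ) : Subgroup ↥(treeGroup n) :=
  Subgroup.closure (insert (xEl n n) (insert (mEl n) (VsetK n n)))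

/-- The normal closure `N_n = ⟨m_n, v_{n-3}, …, v_0⟩^{M_n}` of Section 5. -/
def NgrpB (n : ℕ) : Subgroup ↥(treeGroup n) :=
  Subgroup.closure {g | ∃ m ∈ MgrpB n, ∃ h ∈ insert (mEl n) (VsetK n n), g = m * h * m⁻¹}

/-- `U_n = V_n^{⟨x_n⟩}`. -/
def Ugrp (n : ℕ) : Subgroup ↥(treeGroup n) :=
  Subgroup.closure {g | ∃ m ∈ Subgroup.closure {xEl n n}, ∃ v ∈ VsetK n n, g = m * v * m⁻¹}

/-!
Put `w_k = x_k⁻¹ x_{k+1}²`. The odometer `x_k` moves only leaves of the left subtree of height `k`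
and `m_k` only leaves of the left subtree of height `k - 1`, while `w_k` fixes the former subtree
pointwise (there `x_{k+1}²` acts as `x_k`). Disjoint supports make `w_k` commute with `x_k` and
`m_k`, so conjugation by `x_{k+1}^{2F} = x_k^F w_k^F` acts on `m_{k+1} = x_k² m_k x_k⁻¹` as
conjugation by `x_k^F`, and the identity for `k` yields the one for `k + 1`. The induction starts
from `a₁⁻¹ x₂⁻² = x₂³ a₁ x₂⁻³`, which holds since `a₁` inverts `x₂ = a₁a₂` and `x₂⁴ = 1`.
-/

section GroupIdentities

variable {G : Type*} [Group G]

theorem inv_mul_inv_sq_eq_conj_pow_three {a x : G} (ha : a * a = 1) (hax : a * x * a = x⁻¹)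
    (hx : Commute a (x ^ 2)) : a⁻¹ * (x ^ 2)⁻¹ = x ^ 3 * a * (x ^ 3)⁻¹ := by
  have hainv : a⁻¹ = a := inv_eq_of_mul_eq_one_right ha
  have hsq : (x ^ 2)⁻¹ = x ^ 2 :=
    calc (x ^ 2)⁻¹ = (a * x * a⁻¹) * (a * x * a⁻¹) := by rw [hainv, hax, sq, mul_inv_rev]
      _ = a * x ^ 2 * a⁻¹ := by rw [sq]; group
      _ = x ^ 2 := by rw [hx.eq, mul_inv_cancel_right]
  have hx4 : x * x ^ 3 = 1 := by
    rw [← inv_mul_cancel (x ^ 2), hsq]; group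
  have hxa : a * x = x ^ 3 * a := by
    rw [← inv_eq_of_mul_eq_one_right hx4, ← hax, mul_assoc, ha, mul_one]
  rw [eq_mul_inv_iff_mul_eq, ← hxa, hainv]
  group

theorem conj_identity_step {x y m q : G} {F : ℕ} (hx : Commute x (x⁻¹ * y ^ 2))
    (hm : Commute m (x⁻¹ * y ^ 2)) (ih : m⁻¹ * q = x ^ (F + 1) * m * (x ^ (F + 1))⁻¹) :
    (x ^ 2 * m * x⁻¹)⁻¹ * (x ^ 2 * q) = y ^ (2 * F) * (x ^ 2 * m * x⁻¹) * (y ^ (2 * F))⁻¹ := by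
  set w := x⁻¹ * y ^ 2
  have hy : y ^ (2 * F) = x ^ F * w ^ F := by
    rw [pow_mul, ← mul_inv_cancel_left x (y ^ 2), hx.mul_pow]
  have hwx : Commute (w ^ F) x := hx.symm.pow_left F
  have hwm : Commute (w ^ F) (x ^ 2 * m * x⁻¹) :=
    ((hwx.pow_right 2).mul_right (hm.symm.pow_left F)).mul_right hwx.inv_right
  calc (x ^ 2 * m * x⁻¹)⁻¹ * (x ^ 2 * q) = x * (m⁻¹ * q) := by group
    _ = x ^ F * (w ^ F * (x ^ 2 * m * x⁻¹) * (w ^ F)⁻¹) * (x ^ F)⁻¹ := by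
      rw [ih, hwm.eq, mul_inv_cancel_right]; group
    _ = y ^ (2 * F) * (x ^ 2 * m * x⁻¹) * (y ^ (2 * F))⁻¹ := by rw [hy]; group

end GroupIdentities

theorem List.prod_map_range_succ_sub {M : Type*} [Monoid M] (f : ℕ → M) (i : ℕ) :
    ((List.range (i + 1)).map fun j => f (i + 1 - j)).prod =
      f (i + 1) * ((List.range i).map fun j => f (i - j)).prod := by
  rw [List.prod_range_succ']
  simp only [Nat.sub_zero, Nat.succ_eq_add_one, Nat.add_sub_add_right]

/-- The leaves below the leftmost vertex at depth `n - k`: the support of the copy of `W_k`. -/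
def InLeftSubtree (n k : ℕ) (ℓ : Leaf n) : Prop :=
  ∀ s : Fin n, (s : ℕ) < n - k → ℓ s = false

theorem InLeftSubtree.mono {n j k : ℕ} {ℓ : Leaf n} (h : InLeftSubtree n j ℓ) (hjk : j ≤ k) :
    InLeftSubtree n k ℓ :=
  fun s hs => h s (by omega)

theorem aPerm_apply_of_not_inLeftSubtree {n k : ℕ} {ℓ : Leaf n} (h : ¬InLeftSubtree n k ℓ) :
    aPerm n k ℓ = ℓ :=
  funext fun _ => if_neg fun hc => h hc.2

theorem aPerm_succ_apply_not_inLeftSubtree {n k : ℕ} {ℓ : Leaf n} (hk : k < n)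
    (h : InLeftSubtree n k ℓ) : ¬InLeftSubtree n k (aPerm n (k + 1) ℓ) := by
  intro h'
  have hflip : aPerm n (k + 1) ℓ ⟨n - (k + 1), by omega⟩ = true := by
    rw [aPerm_apply, aFun_apply, if_pos ⟨rfl, fun s hs => h s (by omega)⟩,
      h _ (by simp only; omega), Bool.not_false]
  rw [h' _ (by simp only; omega)] at hflip
  exact Bool.false_ne_true hflip

theorem aEl_mul_self (n k : ℕ) : aEl n k * aEl n k = 1 :=
  Subtype.ext <| Equiv.ext <| aFun_involutive n k

theorem xEl_zero (n : ℕ) : xEl n 0 = 1 := rfl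

theorem xEl_succ (n k : ℕ) : xEl n (k + 1) = xEl n k * aEl n (k + 1) := by
  rw [xEl, xEl, List.range_succ, List.map_append, List.prod_append, List.map_singleton,
    List.prod_singleton]

theorem xEl_one (n : ℕ) : xEl n 1 = aEl n 1 := by
  rw [xEl_succ, xEl_zero, one_mul]

theorem xEl_two (n : ℕ) : xEl n 2 = aEl n 1 * aEl n 2 := by
  rw [xEl_succ, xEl_one]

theorem xEl_apply_of_not_inLeftSubtree {n k : ℕ} {ℓ : Leaf n} (h : ¬InLeftSubtree n k ℓ) :
    (xEl n k : Equiv.Perm (Leaf n)) ℓ = ℓ := by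
  induction k with
  | zero => rfl
  | succ k ih =>
    rw [xEl_succ, Subgroup.coe_mul, Equiv.Perm.mul_apply]
    change (xEl n k : Equiv.Perm (Leaf n)) (aPerm n (k + 1) ℓ) = ℓ
    rw [aPerm_apply_of_not_inLeftSubtree h, ih fun h' => h (h'.mono k.le_succ)]

theorem xEl_succ_sq_apply_of_inLeftSubtree {n k : ℕ} {ℓ : Leaf n} (hk : k < n)
    (h : InLeftSubtree n k ℓ) :
    ((xEl n (k + 1) ^ 2 : treeGroup n) : Equiv.Perm (Leaf n)) ℓ =
      (xEl n k : Equiv.Perm (Leaf n)) ℓ := by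
  rw [sq, xEl_succ, Subgroup.coe_mul, Subgroup.coe_mul, Equiv.Perm.mul_apply,
    Equiv.Perm.mul_apply, Equiv.Perm.mul_apply]
  change (xEl n k : Equiv.Perm (Leaf n)) (aPerm n (k + 1)
    ((xEl n k : Equiv.Perm (Leaf n)) (aPerm n (k + 1) ℓ))) = _
  rw [xEl_apply_of_not_inLeftSubtree (aPerm_succ_apply_not_inLeftSubtree hk h),
    aPerm_apply, aPerm_apply, aFun_involutive]

theorem xEl_inv_mul_succ_sq_apply_of_inLeftSubtree {n k : ℕ} {ℓ : Leaf n} (hk : k < n)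
    (h : InLeftSubtree n k ℓ) :
    (((xEl n k)⁻¹ * xEl n (k + 1) ^ 2 : treeGroup n) : Equiv.Perm (Leaf n)) ℓ = ℓ := by
  rw [Subgroup.coe_mul, Equiv.Perm.mul_apply, xEl_succ_sq_apply_of_inLeftSubtree hk h,
    Subgroup.coe_inv]
  exact Equiv.Perm.inv_eq_iff_eq.mpr rfl

theorem commute_of_disjoint {n : ℕ} {g h : treeGroup n}
    (hgh : (g : Equiv.Perm (Leaf n)).Disjoint h) : Commute g h :=
  Commute.of_map (f := (treeGroup n).subtype) Subtype.val_injective hgh.commute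

theorem commute_xEl_inv_mul_succ_sq {n k : ℕ} (hk : k < n) :
    Commute (xEl n k) ((xEl n k)⁻¹ * xEl n (k + 1) ^ 2) :=
  commute_of_disjoint fun ℓ => by
    by_cases h : InLeftSubtree n k ℓ
    · exact Or.inr (xEl_inv_mul_succ_sq_apply_of_inLeftSubtree hk h)
    · exact Or.inl (xEl_apply_of_not_inLeftSubtree h)

theorem aEl_one_mul_xEl_two_mul_aEl_one (n : ℕ) : aEl n 1 * xEl n 2 * aEl n 1 = (xEl n 2)⁻¹ := by
  rw [xEl_two, mul_inv_rev, inv_eq_of_mul_eq_one_right (aEl_mul_self n 1),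
    inv_eq_of_mul_eq_one_right (aEl_mul_self n 2), ← mul_assoc, aEl_mul_self, one_mul]

theorem aEl_one_inv_mul_eq_conj {n : ℕ} (hn : 1 < n) :
    (aEl n 1)⁻¹ * (xEl n 2 ^ 2)⁻¹ = xEl n 2 ^ 3 * aEl n 1 * (xEl n 2 ^ 3)⁻¹ := by
  have h := commute_xEl_inv_mul_succ_sq hn
  rw [xEl_one] at h
  refine inv_mul_inv_sq_eq_conj_pow_three (aEl_mul_self n 1) (aEl_one_mul_xEl_two_mul_aEl_one n) ?_
  simpa only [mul_inv_cancel_left] using (Commute.refl (aEl n 1)).mul_right h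

section mSeq

variable {n : ℕ} {m : ℕ → treeGroup n} (h2 : m 2 = aEl n 1)
  (hrec : ∀ k : ℕ, 2 ≤ k → k < n → m (k + 1) = (xEl n k) ^ 2 * m k * (xEl n k)⁻¹)
include h2 hrec

theorem mSeq_apply_of_not_inLeftSubtree {k : ℕ} (hk2 : 2 ≤ k) (hkn : k ≤ n) {ℓ : Leaf n}
    (h : ¬InLeftSubtree n (k - 1) ℓ) : (m k : Equiv.Perm (Leaf n)) ℓ = ℓ := by
  induction k, hk2 using Nat.le_induction with
  | base => rw [h2]; exact aPerm_apply_of_not_inLeftSubtree h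
  | succ k hk2 ih =>
    have hx : (xEl n k : Equiv.Perm (Leaf n)) ℓ = ℓ := xEl_apply_of_not_inLeftSubtree h
    rw [hrec k hk2 (by omega), Subgroup.coe_mul, Subgroup.coe_mul, Subgroup.coe_pow,
      Equiv.Perm.mul_apply, Equiv.Perm.mul_apply, Subgroup.coe_inv,
      Equiv.Perm.inv_eq_iff_eq.mpr hx.symm,
      ih (by omega) fun h' => h (h'.mono (by omega)), sq, Equiv.Perm.mul_apply, hx, hx]

theorem commute_mSeq_xEl_inv_mul_succ_sq {k : ℕ} (hk2 : 2 ≤ k) (hkn : k < n) :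
    Commute (m k) ((xEl n k)⁻¹ * xEl n (k + 1) ^ 2) :=
  commute_of_disjoint fun ℓ => by
    by_cases h : InLeftSubtree n (k - 1) ℓ
    · exact Or.inr (xEl_inv_mul_succ_sq_apply_of_inLeftSubtree hkn (h.mono (by omega)))
    · exact Or.inl (mSeq_apply_of_not_inLeftSubtree h2 hrec hk2 hkn.le h)

theorem mSeq_succ_conj_identity {k : ℕ} (hk2 : 2 ≤ k) (hkn : k < n) {q : treeGroup n} {F : ℕ}
    (ih : (m k)⁻¹ * q = xEl n k ^ (F + 1) * m k * (xEl n k ^ (F + 1))⁻¹) :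
    (m (k + 1))⁻¹ * (xEl n k ^ 2 * q) =
      xEl n (k + 1) ^ (2 * F) * m (k + 1) * (xEl n (k + 1) ^ (2 * F))⁻¹ := by
  rw [hrec k hk2 hkn]
  exact conj_identity_step (commute_xEl_inv_mul_succ_sq hkn)
    (commute_mSeq_xEl_inv_mul_succ_sq h2 hrec hk2 hkn) ih

end mSeq

/-- if `m_k ∈ W_n` satisfies `m_2 = a_1` and `m_{k+1} = x_k² m_k x_k⁻¹`,
then for all `n ≥ 3`: `m_n⁻¹ v_{n-3} v_{n-4} ⋯ v_2 v_1 = (m_n)^{x_n^(2^(n-2)+2)}`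
(conjugation `g^h = h g h⁻¹`). -/
theorem mSeq_conj_identity (n : ℕ) (hn : 3 ≤ n) (m : ℕ → ↥(treeGroup n))
    (h2 : m 2 = aEl n 1)
    (hrec : ∀ k : ℕ, 2 ≤ k → k < n → m (k + 1) = (xEl n k) ^ 2 * m k * (xEl n k)⁻¹) :
    (m n)⁻¹ * (((List.range (n - 3)).map fun j => vEl n (n - 3 - j))).prod =
      (xEl n n) ^ (2 ^ (n - 2) + 2) * m n * ((xEl n n) ^ (2 ^ (n - 2) + 2))⁻¹ := by
  suffices key : ∀ k, 3 ≤ k → k ≤ n →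
      (m k)⁻¹ * (((List.range (k - 3)).map fun j => vEl n (k - 3 - j))).prod =
        (xEl n k) ^ (2 ^ (k - 2) + 2) * m k * ((xEl n k) ^ (2 ^ (k - 2) + 2))⁻¹ from
    key n hn le_rfl
  intro k hk
  induction k, hk using Nat.le_induction with
  | base =>
    intro h3n
    have h := mSeq_succ_conj_identity h2 hrec le_rfl (by omega) (F := 2)
      (by rw [h2]; exact aEl_one_inv_mul_eq_conj (by omega))
    simpa using h
  | succ k hk ih =>
    intro hkn
    have h := mSeq_succ_conj_identity h2 hrec (by omega) hkn (F := 2 ^ (k - 2) + 1) (ih (by omega))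
    rwa [show k + 1 - 3 = k - 3 + 1 by omega, List.prod_map_range_succ_sub, vEl,
      show k - 3 + 1 + 2 = k by omega, show 2 ^ (k + 1 - 2) + 2 = 2 * (2 ^ (k - 2) + 1) by
        rw [show k + 1 - 2 = k - 2 + 1 by omega, pow_succ]; ring]
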